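/- arXiv:2405.05159 — 6 statements merged into one kernel-verified Lean document; each statement's English description precedes it below -/
import Mathlib

section
/- Let $\mathbb{K}$ be a field of characteristic $p > 0$ and let $n \ge 1$, and let $\tilde h$ be an integer with $1 \le \tilde h \le p - 1$. Let $f(z) = (z_{i_1} \cdots z_{i_k})^{\tilde h}$ and $g(z) = (z_{i_1} \cdots z_{i_k})^{p - \tilde h}$ be monomials arising from a pair of monomials of $Q_j^{(\ell p - 1)}(z, h)$ and $Q_j^{(mp-1)}(z, -h)$ respectively, with the degree conditions $k\tilde h = n\tilde h - \ell p$ and $k(p - \tilde h) = n(p - \tilde h) - mp$. Then $p$ divides $n - k$, and hence $(n-k) \sum_{1 \le i_1 < \dots < i_k \le n} (z_{i_1} \cdots z_{i_k})^p = 0$ in $\mathbb{K}[z_1, \dots, z_n]$. -/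
/-- The final step in the orthogonality proof: if `k h̃ + ℓ p = n h̃` and
`k (p - h̃) + m p = n (p - h̃)` with `1 ≤ h̃ ≤ p - 1`, then `p ∣ n - k` and hence
`(n - k) ∑_{i₁ < ⋯ < i_k} (z_{i₁} ⋯ z_{i_k})^p = 0` in `K[z₁,…,z_n]` for a field
`K` of characteristic `p`. -/
theorem stmt_6 (p : ℕ) [Fact p.Prime] (K : Type*) [Field K] [CharP K p]
    (n k ℓ m h : ℕ) (hn : 1 ≤ n) (hk : k ≤ n) (h1 : 1 ≤ h) (h2 : h ≤ p - 1)
    (e1 : k * h + ℓ * p = n * h) (e2 : k * (p - h) + m * p = n * (p - h)) :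
    p ∣ (n - k) ∧
    ((n - k : ℕ) : MvPolynomial (Fin n) K) *
        ∑ s ∈ (Finset.univ : Finset (Fin n)).powersetCard k,
          ∏ i ∈ s, MvPolynomial.X i ^ p = 0 := by
  have hp := (Fact.out : p.Prime)
  have hlt : h < p := by omega
  have hdvd : p ∣ (n - k) := by
    have : (n - k) * h = ℓ * p := by
      have h3 := Nat.sub_mul n k h
      omega
    have : p ∣ (n - k) * h := ⟨ℓ, by rw [this, Nat.mul_comm]⟩
    rcases (hp.dvd_mul.mp this) with h' | h'
    · exact h'
    · exact absurd (Nat.le_of_dvd (by omega) h') (by omega)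
  refine ⟨hdvd, ?_⟩
  have : ((n - k : ℕ) : MvPolynomial (Fin n) K) = 0 :=
    (CharP.cast_eq_zero_iff _ p _).mpr hdvd
  rw [this, zero_mul]
end

section
/- Let $R$ be an $\mathbb{F}_p$-algebra and $M$ a module over the polynomial algebra $R[x]$ equipped with a connection, i.e., an additive map $\nabla : M \to M$ satisfying $\nabla(fm) = f'm + f\nabla(m)$ for $f \in R[x]$, $m \in M$. Assume $\nabla^p M = 0$ and $x^p M = 0$. Then the projection $M^{\nabla = 0} \to M / xM$ from the submodule of flat sections is an isomorphism of $R$-modules, with inverse induced by the map $-\nabla^{p-1} \circ (x^{p-1} \cdot) : M \to M$. -/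
open Polynomial

/-- Let `R` be an `𝔽_p`-algebra and `M` a module over `R[x]` with a connection
`D : M → M` (additive, satisfying the Leibniz rule `D (f • m) = f' • m + f • D m`).
If `D^p M = 0` and `x^p M = 0`, then the map `m ↦ -D^{p-1}(x^{p-1} • m)` lands in
the flat sections `M^{D=0}`, the projection `M^{D=0} → M/xM` is bijective, and its
inverse is induced by `m ↦ -D^{p-1}(x^{p-1} • m)`. -/
theorem stmt_7 (p : ℕ) [Fact p.Prime] (R : Type*) [CommRing R] [CharP R p]
    (M : Type*) [AddCommGroup M] [Module (Polynomial R) M]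
    (D : M →+ M)
    (hLeib : ∀ (f : Polynomial R) (m : M),
      D (f • m) = (Polynomial.derivative f) • m + f • D m)
    (hDp : ∀ m : M, (⇑D)^[p] m = 0)
    (hxp : ∀ m : M, ((X : Polynomial R) ^ p) • m = 0) :
    (∀ m : M, D (-(⇑D)^[p - 1] (((X : Polynomial R) ^ (p - 1)) • m)) = 0) ∧
    Function.Bijective (fun m : {m : M // D m = 0} =>
      (Submodule.Quotient.mk m.val :
        M ⧸ LinearMap.range ((LinearMap.lsmul (Polynomial R) M) X))) ∧
    (∀ m : M,
      (Submodule.Quotient.mk (-(⇑D)^[p - 1] (((X : Polynomial R) ^ (p - 1)) • m)) :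
        M ⧸ LinearMap.range ((LinearMap.lsmul (Polynomial R) M) X)) =
        Submodule.Quotient.mk m) ∧
    (∀ m : M, D m = 0 → -(⇑D)^[p - 1] (((X : Polynomial R) ^ (p - 1)) • m) = m) := by
  have hp2 : 2 ≤ p := (Fact.out : p.Prime).two_le
  -- basic derivative facts
  have hDpow : ∀ (n : ℕ) (v : M), D ((X : Polynomial R) ^ n • v) =
      (n : Polynomial R) • ((X : Polynomial R) ^ (n - 1) • v)
        + (X : Polynomial R) ^ n • D v := by
    intro n v
    rw [hLeib, derivative_X_pow, mul_smul, Polynomial.C_eq_natCast]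
  have hDcast : ∀ (n : ℕ) (v : M), D ((n : Polynomial R) • v)
      = (n : Polynomial R) • D v := by
    intro n v
    rw [hLeib, Polynomial.derivative_natCast, zero_smul, zero_add]
  -- Wilson's theorem in R[x]
  have hw : ((Nat.factorial (p - 1)) : Polynomial R) = -1 := by
    have h1 : ((Nat.factorial (p - 1)) : R) = -1 := by
      have hz := ZMod.wilsons_lemma p
      calc ((Nat.factorial (p - 1)) : R)
          = ZMod.castHom (dvd_refl p) R ((Nat.factorial (p - 1)) : ZMod p) := by
            rw [map_natCast]
        _ = -1 := by rw [hz, map_neg, map_one]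
    rw [← map_natCast (Polynomial.C : R →+* Polynomial R), h1, map_neg, map_one]
  -- key expansion lemma
  have key : ∀ j, j ≤ p - 1 → ∀ m : M, ∃ u : M,
      (⇑D)^[j] ((X : Polynomial R) ^ (p - 1) • m)
        = (((p - 1).descFactorial j : ℕ) : Polynomial R)
            • ((X : Polynomial R) ^ (p - 1 - j) • m)
          + (X : Polynomial R) ^ (p - j) • u := by
    intro j
    induction j with
    | zero =>
      intro _ m
      exact ⟨0, by simp⟩
    | succ j ih =>
      intro hj m
      obtain ⟨u, hu⟩ := ih (by omega) m
      have ha1 : p - 1 - j = (p - 2 - j) + 1 := by omega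
      have ha2 : p - j = (p - 2 - j) + 2 := by omega
      set a := p - 2 - j with hadef
      refine ⟨(((p - 1).descFactorial j : ℕ) : Polynomial R) • D m
        + ((a + 2 : ℕ) : Polynomial R) • u + (X : Polynomial R) • D u, ?_⟩
      have hb1 : p - 1 - (j + 1) = a := by omega
      have hb2 : p - (j + 1) = a + 1 := by omega
      have hc : (p - 1).descFactorial (j + 1) = (a + 1) * (p - 1).descFactorial j := by
        rw [Nat.descFactorial_succ]
        congr 1
      rw [Function.iterate_succ_apply', hu, ha1, ha2, map_add, hDcast, hDpow, hDpow,
        hb1, hb2, hc]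
      simp only [Nat.add_sub_cancel]
      push_cast
      module
  -- expansion for flat sections
  have hflat : ∀ j, j ≤ p - 1 → ∀ m : M, D m = 0 →
      (⇑D)^[j] ((X : Polynomial R) ^ (p - 1) • m)
        = (((p - 1).descFactorial j : ℕ) : Polynomial R)
            • ((X : Polynomial R) ^ (p - 1 - j) • m) := by
    intro j
    induction j with
    | zero => intro _ m _; simp
    | succ j ih =>
      intro hj m hm
      have hu := ih (by omega) m hm
      have ha1 : p - 1 - j = (p - 2 - j) + 1 := by omega
      set a := p - 2 - j with hadef
      have hb1 : p - 1 - (j + 1) = a := by omega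
      have hc : (p - 1).descFactorial (j + 1) = (a + 1) * (p - 1).descFactorial j := by
        rw [Nat.descFactorial_succ]
        congr 1
      rw [Function.iterate_succ_apply', hu, ha1]
      rw [hDcast, hDpow, hm, smul_zero, add_zero, hb1, hc]
      simp only [Nat.add_sub_cancel]
      push_cast
      module
  have hp1 : p - 1 + 1 = p := by omega
  have hp1' : p - (p - 1) = 1 := by omega
  -- the key normal form
  have hE : ∀ m : M, ∃ u : M,
      (⇑D)^[p - 1] ((X : Polynomial R) ^ (p - 1) • m) = -m + (X : Polynomial R) • u := by
    intro m
    obtain ⟨u, hu⟩ := key (p - 1) le_rfl m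
    refine ⟨u, ?_⟩
    rw [hu, Nat.sub_self, Nat.descFactorial_self, hw, pow_zero, one_smul, hp1',
      pow_one, neg_one_smul]
  -- part 1
  have h1 : ∀ m : M, D (-(⇑D)^[p - 1] (((X : Polynomial R) ^ (p - 1)) • m)) = 0 := by
    intro m
    have hz := hDp (((X : Polynomial R) ^ (p - 1)) • m)
    rw [← hp1, Function.iterate_succ_apply', Nat.add_sub_cancel] at hz
    rw [map_neg, hz, neg_zero]
  -- part 4
  have h4 : ∀ m : M, D m = 0 →
      -(⇑D)^[p - 1] (((X : Polynomial R) ^ (p - 1)) • m) = m := by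
    intro m hm
    rw [hflat (p - 1) le_rfl m hm, Nat.sub_self, Nat.descFactorial_self, hw,
      pow_zero, one_smul, neg_one_smul, neg_neg]
  -- part 3
  have h3 : ∀ m : M,
      (Submodule.Quotient.mk (-(⇑D)^[p - 1] (((X : Polynomial R) ^ (p - 1)) • m)) :
        M ⧸ LinearMap.range ((LinearMap.lsmul (Polynomial R) M) X)) =
        Submodule.Quotient.mk m := by
    intro m
    obtain ⟨u, hu⟩ := hE m
    rw [hu, Submodule.Quotient.eq]
    refine ⟨-u, ?_⟩
    simp only [LinearMap.lsmul_apply]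
    module
  -- E vanishes on xM
  have hEx : ∀ n : M,
      -(⇑D)^[p - 1] (((X : Polynomial R) ^ (p - 1)) • ((X : Polynomial R) • n)) = 0 := by
    intro n
    have : ((X : Polynomial R) ^ (p - 1)) • ((X : Polynomial R) • n) = 0 := by
      rw [smul_smul, ← pow_succ, hp1, hxp]
    rw [this, Function.iterate_fixed (map_zero D) (p - 1), neg_zero]
  refine ⟨h1, ⟨?_, ?_⟩, h3, h4⟩
  · -- injective
    intro m₁ m₂ h
    apply Subtype.ext
    simp only at h
    rw [Submodule.Quotient.eq] at h
    obtain ⟨n, hn⟩ := h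
    simp only [LinearMap.lsmul_apply] at hn
    have hd : D (m₁.val - m₂.val) = 0 := by
      rw [map_sub, m₁.prop, m₂.prop, sub_zero]
    have h4' := h4 _ hd
    rw [← hn] at h4'
    rw [hEx n] at h4'
    have hz : m₁.val - m₂.val = 0 := by rw [← hn, ← h4']
    exact sub_eq_zero.mp hz
  · -- surjective
    intro q
    obtain ⟨m, rfl⟩ := Submodule.Quotient.mk_surjective _ q
    exact ⟨⟨-(⇑D)^[p - 1] (((X : Polynomial R) ^ (p - 1)) • m), h1 m⟩, h3 m⟩
end

section
/- Let $\mathbb{K}$ be an algebraically closed field of characteristic $p > n > 1$ (or characteristic $0$), and let $z_1, \dots, z_n$ be algebraically independent over the prime field. Then the polynomial $\frac{\partial}{\partial x} \prod_{i=1}^n (x - z_i) = n x^{n-1} - (n-1)\left(\sum_i z_i\right) x^{n-2} + \cdots$ is irreducible over the field $\mathbb{K}(z_1, \dots, z_n)$. -/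
/-!
Write `n = m + 1`, `P = (x - z₀) Q` with `Q = ∏_{i ≥ 1} (x - zᵢ)`. Read as a polynomial in `z₀`
with coefficients in `S[x]`, `S = K[z₁, …, zₘ]`, the derivative `P' = Q + (x - z₀) Q'` is linear,
and its two coefficients `Q + x Q'` and `-Q'` are relatively prime because `Q` has distinct roots
over `Frac S`. A linear polynomial with relatively prime coefficients is irreducible, so `P'` is
irreducible over `K[z₀, …, zₘ]`; its leading coefficient `n` is a unit when `char K` is `0` or
exceeds `n`, so `P'` is primitive and Gauss's lemma passes to the fraction field.
-/

open Polynomial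

namespace Polynomial

theorem Monic.isPrimitive_derivative {R : Type*} [CommRing R] {p : R[X]} (hp : p.Monic)
    (hdeg : IsUnit (p.natDegree : R)) : (derivative p).IsPrimitive := by
  intro r hr
  obtain h0 | hpos := Nat.eq_zero_or_pos p.natDegree
  · have : Subsingleton R := subsingleton_of_zero_eq_one (by simpa [h0] using hdeg)
    exact isUnit_of_subsingleton r
  have hcoeff : (derivative p).coeff (p.natDegree - 1) = p.natDegree := by
    rw [coeff_derivative, Nat.sub_add_cancel hpos, hp.coeff_natDegree, one_mul,
      Nat.cast_pred hpos, sub_add_cancel]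
  exact isUnit_of_dvd_unit (hcoeff ▸ (C_dvd_iff_dvd_coeff r _).1 hr _) hdeg

theorem Monic.isRelPrime_derivative {R K : Type*} [CommRing R] [IsDomain R] [CommRing K]
    [IsDomain K] {f : R →+* K} (hf : Function.Injective f) {p : R[X]} (hp : p.Monic)
    (hsep : (p.map f).Separable) : IsRelPrime p (derivative p) := by
  intro d hdp hdp'
  have hunit : IsUnit (d.map f) :=
    hsep.isUnit_of_dvd' (Polynomial.map_dvd f hdp) (derivative_map p f ▸ Polynomial.map_dvd f hdp')
  have hdeg : d.natDegree = 0 := by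
    simpa [natDegree_map_eq_of_injective hf] using natDegree_eq_zero_of_isUnit hunit
  rw [eq_C_of_natDegree_eq_zero hdeg, isUnit_C]
  simpa only [Polynomial.leadingCoeff, hdeg] using hp.isUnit_leadingCoeff_of_dvd hdp

open Bivariate

theorem Bivariate.swap_derivative_Y_sub_C_X_mul_map_C {S : Type*} [CommRing S] (Q : S[X]) :
    swap (derivative ((Y - C X) * Q.map C)) = C Q + (C X - Y) * C (derivative Q) := by
  rw [derivative_mul, derivative_map]
  simp [Bivariate.swap_map_C, Bivariate.swap_X, Bivariate.swap_Y]

theorem Monic.irreducible_C_add_C_X_sub_Y_mul_C_derivative {S : Type*} [CommRing S] [IsDomain S]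
    {Q : S[X]} (hQ : Q.Monic) (hdeg : Q.natDegree ≠ 0) (hrel : IsRelPrime Q (derivative Q)) :
    Irreducible (C Q + (C X - Y) * C (derivative Q)) := by
  have hQ' : derivative Q ≠ 0 := by
    rintro h
    rw [h, isRelPrime_zero_right, hQ.isUnit_iff] at hrel
    simp [hrel] at hdeg
  convert irreducible_C_mul_X_add_C (neg_ne_zero.2 hQ') (hrel.add_mul_left_left X).symm.neg_left
    using 1
  simp only [map_neg, map_add, map_mul]
  ring

end Polynomial

noncomputable def masterPolynomial (R : Type*) [CommRing R] (n : ℕ) :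
    (MvPolynomial (Fin n) R)[X] :=
  ∏ i : Fin n, (X - C (MvPolynomial.X i))

section masterPolynomial

variable (R : Type*) [CommRing R] (n : ℕ)

theorem monic_masterPolynomial : (masterPolynomial R n).Monic :=
  monic_prod_X_sub_C _ _

@[simp]
theorem natDegree_masterPolynomial [Nontrivial R] : (masterPolynomial R n).natDegree = n := by
  simp [masterPolynomial]

theorem separable_map_masterPolynomial [Nontrivial R] {K : Type*} [Field K]
    {f : MvPolynomial (Fin n) R →+* K} (hf : Function.Injective f) :
    ((masterPolynomial R n).map f).Separable := by
  rw [masterPolynomial, Polynomial.map_prod]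
  simpa using separable_prod_X_sub_C_iff.2 (hf.comp MvPolynomial.X_injective)

open Bivariate in
theorem map_finSuccEquiv_masterPolynomial :
    (masterPolynomial R (n + 1)).map (MvPolynomial.finSuccEquiv R n).toRingHom =
      (Y - C X) * (masterPolynomial R n).map C := by
  simp [masterPolynomial, Polynomial.map_prod, Fin.prod_univ_succ,
    MvPolynomial.finSuccEquiv_X_zero, MvPolynomial.finSuccEquiv_X_succ]

theorem irreducible_derivative_masterPolynomial [IsDomain R] (hn : 1 < n) :
    Irreducible (derivative (masterPolynomial R n)) := by
  obtain ⟨m, rfl⟩ : ∃ m, n = m + 1 := ⟨n - 1, by omega⟩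
  have hinj := IsFractionRing.injective (MvPolynomial (Fin m) R)
    (FractionRing (MvPolynomial (Fin m) R))
  have hrel : IsRelPrime (masterPolynomial R m) (derivative (masterPolynomial R m)) :=
    (monic_masterPolynomial R m).isRelPrime_derivative hinj
      (separable_map_masterPolynomial R m hinj)
  have hirr := (monic_masterPolynomial R m).irreducible_C_add_C_X_sub_Y_mul_C_derivative
    (by rw [natDegree_masterPolynomial]; omega) hrel
  rw [← Bivariate.swap_derivative_Y_sub_C_X_mul_map_C, ← map_finSuccEquiv_masterPolynomial,
    derivative_map] at hirr
  exact (MulEquiv.irreducible_iff ((mapEquiv (MvPolynomial.finSuccEquiv R m).toRingEquiv).trans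
    Bivariate.swap.toRingEquiv)).1 hirr

end masterPolynomial

theorem stmt_13_general (K : Type*) [Field K] (q n : ℕ) [CharP K q]
    (hn : 1 < n) (hq : q = 0 ∨ n < q) :
    Irreducible (Polynomial.derivative (∏ i : Fin n,
      ((X : Polynomial (FractionRing (MvPolynomial (Fin n) K))) -
        C (algebraMap (MvPolynomial (Fin n) K)
            (FractionRing (MvPolynomial (Fin n) K)) (MvPolynomial.X i))))) := by
  have hchar : (n : K) ≠ 0 := by
    rw [Ne, CharP.cast_eq_zero_iff K q]
    rcases hq with rfl | hlt
    · simp only [zero_dvd_iff]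
      omega
    · exact Nat.not_dvd_of_pos_of_lt (by omega) hlt
  have hprim : (derivative (masterPolynomial K n)).IsPrimitive :=
    (monic_masterPolynomial K n).isPrimitive_derivative <| by
      simpa using (isUnit_iff_ne_zero.2 hchar).map (algebraMap K (MvPolynomial (Fin n) K))
  have hirr := irreducible_derivative_masterPolynomial K n hn
  rw [hprim.irreducible_iff_irreducible_map_fraction_map
    (K := FractionRing (MvPolynomial (Fin n) K)), ← derivative_map] at hirr
  simpa [masterPolynomial, Polynomial.map_prod] using hirr

/-- Over an algebraically closed field `K` of characteristic `0` or `p > n`, with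
`z_1, …, z_n` algebraically independent (realized as the generators of the field
of rational functions `K(z_1, …, z_n)`), the polynomial
`∂/∂x ∏_{i=1}^n (x - z_i)` is irreducible over `K(z_1, …, z_n)`. -/
theorem stmt_13 (K : Type*) [Field K] [IsAlgClosed K] (q n : ℕ) [CharP K q]
    (hn : 1 < n) (hq : q = 0 ∨ n < q) :
    Irreducible (Polynomial.derivative (∏ i : Fin n,
      ((X : Polynomial (FractionRing (MvPolynomial (Fin n) K))) -
        C (algebraMap (MvPolynomial (Fin n) K)
            (FractionRing (MvPolynomial (Fin n) K)) (MvPolynomial.X i))))) :=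
  stmt_13_general K q n hn hq
end

section
/- Let $q, n$ be coprime, $n > 1$, $0 < r < q$, and work on the curve $y^q = \prod_{a=1}^n (x - z_a)$ over a field $k$ containing distinct $z_1, \dots, z_n$, with $\gcd(nq, \mathrm{char}\,k)=1$. For $1 \le k_0, j$ with $j \le \lfloor n(q-r)/q \rfloor$, the residue at the point $D_{k_0}$ over $z_{k_0}$ of the meromorphic differential $\frac{-q}{r y^r} \cdot \frac{x^{j-1} dx}{y^{q-r}}$ equals $\frac{-q}{r\, C_{k_0}(z)} z_{k_0}^{j-1}$, where $C_{k_0}(z) = \prod_{i \ne k_0} (z_{k_0} - z_i)$. -/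
/-!
At a simple pole `t` the residue of `N / ((X - t) G)` is `N(t) / G(t)`: after translating `t`
to `0`, write `N = (N(0)/G(0)) G + X P`, so that `N / (X G) = (N(0)/G(0)) / X + P / G`, where
`P / G` is a power series because `G(0) ≠ 0`. The points `z_a` are distinct, so `z_{k₀}` is a
simple pole of `x^{j-1} / ∏_a (x - z_a)`.
-/

open Polynomial

namespace RatFunc

variable {K : Type*} [Field K]

theorem coe_algebraMap_polynomial (P : K[X]) :
    ((algebraMap K[X] (RatFunc K) P : RatFunc K) : LaurentSeries K) = (P : PowerSeries K) :=
  (coe_coe P).symm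

theorem coe_C_div_X (A : K) :
    ((C A / X : RatFunc K) : LaurentSeries K) = HahnSeries.single (-1) A := by
  rw [map_div₀, ← algebraMap_C, coe_algebraMap_polynomial, Polynomial.coe_C, PowerSeries.coe_C,
    coe_X, div_eq_mul_inv, HahnSeries.inv_single, inv_one, HahnSeries.C_apply,
    HahnSeries.single_mul_single]
  simp

theorem coeff_coe_div_eq_zero_of_neg (P : K[X]) {G : K[X]} (hG : G.eval 0 ≠ 0) {m : ℤ}
    (hm : m < 0) :
    ((algebraMap K[X] (RatFunc K) P / algebraMap K[X] (RatFunc K) G : RatFunc K) :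
      LaurentSeries K).coeff m = 0 := by
  have hG' : PowerSeries.constantCoeff (G : PowerSeries K) ≠ 0 := by
    rwa [Polynomial.constantCoeff_coe, coeff_zero_eq_eval_zero]
  have hGne : ((G : PowerSeries K) : LaurentSeries K) ≠ 0 :=
    (map_ne_zero_iff _ HahnSeries.ofPowerSeries_injective).mpr
      (fun h => hG' (by rw [h, map_zero]))
  have hexp : ((algebraMap K[X] (RatFunc K) P / algebraMap K[X] (RatFunc K) G : RatFunc K) :
      LaurentSeries K) = ((P * (G : PowerSeries K)⁻¹ : PowerSeries K) : LaurentSeries K) := by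
    rw [map_div₀, coe_algebraMap_polynomial, coe_algebraMap_polynomial, div_eq_iff hGne,
      ← PowerSeries.coe_mul, mul_assoc, PowerSeries.inv_mul_cancel _ hG', mul_one]
  rw [hexp, PowerSeries.coeff_coe, if_pos hm]

theorem coeff_neg_one_coe_div_X_mul (N : K[X]) {G : K[X]} (hG : G.eval 0 ≠ 0) :
    ((algebraMap K[X] (RatFunc K) N / algebraMap K[X] (RatFunc K) (Polynomial.X * G) :
      RatFunc K) : LaurentSeries K).coeff (-1) = N.eval 0 / G.eval 0 := by
  set A := N.eval 0 / G.eval 0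
  obtain ⟨P, hP⟩ : Polynomial.X ∣ N - Polynomial.C A * G := by
    rw [X_dvd_iff, coeff_sub, coeff_C_mul, coeff_zero_eq_eval_zero, coeff_zero_eq_eval_zero,
      div_mul_cancel₀ _ hG, sub_self]
  have hGne : algebraMap K[X] (RatFunc K) G ≠ 0 := by
    refine (map_ne_zero_iff _ (IsFractionRing.injective K[X] (RatFunc K))).mpr ?_
    rintro rfl
    exact hG Polynomial.eval_zero
  have hsplit : algebraMap K[X] (RatFunc K) N / algebraMap K[X] (RatFunc K) (Polynomial.X * G)
      = C A / X + algebraMap K[X] (RatFunc K) P / algebraMap K[X] (RatFunc K) G := by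
    rw [eq_add_of_sub_eq' hP, div_add_div _ _ X_ne_zero hGne]
    simp only [map_add, map_mul, algebraMap_C, algebraMap_X]
  rw [hsplit, map_add, HahnSeries.coeff_add, coe_C_div_X, coeff_coe_div_eq_zero_of_neg P hG
    (by norm_num), HahnSeries.coeff_single_same, add_zero]

theorem coeff_neg_one_laurent_div_X_sub_C_mul (t : K) (N : K[X]) {G : K[X]} (hG : G.eval t ≠ 0) :
    ((laurent t (algebraMap K[X] (RatFunc K) N /
      algebraMap K[X] (RatFunc K) ((Polynomial.X - Polynomial.C t) * G)) : RatFunc K) :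
      LaurentSeries K).coeff (-1) = N.eval t / G.eval t := by
  rw [laurent_div, taylor_mul, map_sub, taylor_X, taylor_C, add_sub_cancel_right,
    coeff_neg_one_coe_div_X_mul, taylor_eval, taylor_eval, zero_add]
  rwa [taylor_eval, zero_add]

theorem coeff_neg_one_laurent_div_prod_X_sub_C {ι : Type*} [Fintype ι] [DecidableEq ι]
    (N : K[X]) {z : ι → K} (hz : Function.Injective z) (k : ι) :
    ((laurent (z k) (algebraMap K[X] (RatFunc K) N /
      algebraMap K[X] (RatFunc K) (∏ a, (Polynomial.X - Polynomial.C (z a)))) : RatFunc K) :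
      LaurentSeries K).coeff (-1) = N.eval (z k) / ∏ i ∈ Finset.univ.erase k, (z k - z i) := by
  have hroot : ∏ i ∈ Finset.univ.erase k, (z k - z i) ≠ 0 :=
    Finset.prod_ne_zero_iff.mpr fun i hi =>
      sub_ne_zero.mpr fun h => (Finset.mem_erase.mp hi).1 (hz h).symm
  rw [← Finset.mul_prod_erase _ _ (Finset.mem_univ k),
    coeff_neg_one_laurent_div_X_sub_C_mul _ _ (by simpa [eval_prod] using hroot)]
  simp [eval_prod]

end RatFunc

theorem stmt_17_general (K : Type*) [Field K] (q n r j : ℕ)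
    (z : Fin n → K) (hz : Function.Injective z) (k0 : Fin n) :
    ((RatFunc.laurent (z k0)
        (RatFunc.C (-(q : K) / (r : K)) * RatFunc.X ^ (j - 1) /
          ∏ a : Fin n, (RatFunc.X - RatFunc.C (z a))) : RatFunc K) :
      LaurentSeries K).coeff (-1)
      = (-(q : K) / ((r : K) * ∏ i ∈ Finset.univ.erase k0, (z k0 - z i))) *
          z k0 ^ (j - 1) := by
  have hpoly : RatFunc.C (-(q : K) / (r : K)) * RatFunc.X ^ (j - 1) /
        ∏ a : Fin n, (RatFunc.X - RatFunc.C (z a)) =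
      algebraMap K[X] (RatFunc K) (C (-(q : K) / (r : K)) * X ^ (j - 1)) /
        algebraMap K[X] (RatFunc K) (∏ a, (X - C (z a))) := by
    simp only [map_mul, map_pow, map_prod, map_sub, RatFunc.algebraMap_C, RatFunc.algebraMap_X]
  rw [hpoly, RatFunc.coeff_neg_one_laurent_div_prod_X_sub_C _ hz]
  simp only [eval_mul, eval_C, eval_pow, eval_X]
  ring

/-- The residue at the point over `z_{k₀}` of the differential
`(-q/(r y^r))·(x^{j-1} dx / y^{q-r})`, which on the curve `y^q = ∏_a (x - z_a)`
equals `(-q/r)·x^{j-1} dx / ∏_a (x - z_a)`, is `(-q/(r C_{k₀}(z)))·z_{k₀}^{j-1}`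
with `C_{k₀}(z) = ∏_{i ≠ k₀} (z_{k₀} - z_i)`.  The residue is computed as the
coefficient of `X⁻¹` in the Laurent expansion about `z_{k₀}`. -/
theorem stmt_17 (K : Type*) [Field K] (q n r j : ℕ) (hq : 0 < q) (hn : 1 < n)
    (hcop : Nat.Coprime q n) (hr0 : 0 < r) (hrq : r < q)
    (hj1 : 1 ≤ j) (hj2 : j ≤ n * (q - r) / q)
    (hqK : (q : K) ≠ 0) (hnK : (n : K) ≠ 0) (hrK : (r : K) ≠ 0)
    (z : Fin n → K) (hz : Function.Injective z) (k0 : Fin n) :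
    ((RatFunc.laurent (z k0)
        (RatFunc.C (-(q : K) / (r : K)) * RatFunc.X ^ (j - 1) /
          ∏ a : Fin n, (RatFunc.X - RatFunc.C (z a))) : RatFunc K) :
      LaurentSeries K).coeff (-1)
      = (-(q : K) / ((r : K) * ∏ i ∈ Finset.univ.erase k0, (z k0 - z i))) *
          z k0 ^ (j - 1) :=
  stmt_17_general K q n r j z hz k0
end

section
/- Let $p$ be a prime, $\mathbb{K}$ a field of characteristic $p$, and $a, \tilde h, r, q$ integers with $r = pa - q\tilde h$ and $0 < \tilde h \le p$. Let $P(x,z) = \prod_{i=1}^n (x-z_i)$ and define polynomials $Q_i^{(k)}(z, \tilde h)$ by $\frac{P(x,z)^{\tilde h}}{x - z_i} = \sum_{0 \le k < n\tilde h} Q_i^{(k)}(z, \tilde h) x^k$. Then, applying the Cartier operator coefficientwise, i.e., using $C(y^{-ap} g(x)^p x^{p-1} dx) = y^{-a} g(x)\, dx$ and $C(y^{-ap} x^k dx) = 0$ when $k \not\equiv -1 \pmod p$, one obtains $C\left( \frac{dx}{y^r (x - z_i)} \right) = \sum_{1 \le l \le \lfloor n\tilde h / p \rfloor} \frac{x^{l-1}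 dx}{y^a} \otimes Q_i^{(pl-1)}(z, \tilde h)$. -/
open Polynomial

/-- The Cartier operator formula: with `r = pa - q h̃`, `0 < h̃ ≤ p`, on the curve
`y^q = P(x,z) = ∏ (x - z_s)`, writing `P^{h̃}/(x - z_i) = ∑_k Q_i^{(k)}(z,h̃) x^k`
(the coefficients being taken from the polynomial
`(x - z_i)^{h̃-1} ∏_{s≠i} (x - z_s)^{h̃}` over `K`), and applying the Cartier
operator coefficientwise via the rules `C(y^{-ap} g^p x^{p-1} dx) = y^{-a} g dx`
and `C(y^{-ap} x^k dx) = 0` for `k ≢ -1 (mod p)`, one obtains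
`C(dx/(y^r (x - z_i))) = ∑_{1 ≤ l ≤ ⌊n h̃/p⌋} Q_i^{(pl-1)}(z,h̃) · x^{l-1} dx/y^a`. -/
theorem stmt_18 (p : ℕ) [Fact p.Prime] (K : Type*) [Field K] [CharP K p]
    (n q a h r : ℕ) (hn : 1 ≤ n) (hq : 0 < q) (hh1 : 0 < h) (hh2 : h ≤ p)
    (hrel : (r : ℤ) = p * a - q * h) (hr0 : 0 < r)
    (z : Fin n → K)
    (F : Type*) [Field F] [Algebra K F] (x y : F) (hy0 : y ≠ 0)
    (hcurve : y ^ q = ∏ s : Fin n, (x - algebraMap K F (z s)))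
    (i : Fin n) (hxi : x - algebraMap K F (z i) ≠ 0)
    (C : F →+ F)
    (hCsmul : ∀ (c : K) (f : F), C (algebraMap K F c * f) = algebraMap K F c * C f)
    (hC1 : ∀ l : ℕ, C (x ^ (p * (l + 1) - 1) / y ^ (a * p)) = x ^ l / y ^ a)
    (hC0 : ∀ k : ℕ, ¬ p ∣ (k + 1) → C (x ^ k / y ^ (a * p)) = 0) :
    C (1 / (y ^ r * (x - algebraMap K F (z i))))
      = ∑ l ∈ Finset.Icc 1 (n * h / p),
          algebraMap K F
            ((((X : Polynomial K) - Polynomial.C (z i)) ^ (h - 1) *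
              ∏ s ∈ Finset.univ.erase i,
                ((X : Polynomial K) - Polynomial.C (z s)) ^ h).coeff (p * l - 1)) *
            (x ^ (l - 1) / y ^ a) := by
  have hp : 0 < p := (Fact.out (p := p.Prime)).pos
  have hpa : p * a = r + q * h := by
    have h1 : ((p * a : ℕ) : ℤ) = ((r + q * h : ℕ) : ℤ) := by push_cast; linarith [hrel]
    exact_mod_cast h1
  set Q : Polynomial K := (((X : Polynomial K) - Polynomial.C (z i)) ^ (h - 1) *
      ∏ s ∈ Finset.univ.erase i, ((X : Polynomial K) - Polynomial.C (z s)) ^ h) with hQdef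
  have hdeg : Q.natDegree < n * h := by
    have h1 : Q.natDegree ≤ (h - 1) + (n - 1) * h := by
      refine le_trans (natDegree_mul_le) (add_le_add ?_ ?_)
      · simp [natDegree_pow]
      · refine le_trans (natDegree_prod_le _ _) ?_
        have heq : ∀ s ∈ Finset.univ.erase i,
            (((X : Polynomial K) - Polynomial.C (z s)) ^ h).natDegree = h := by
          intro s _; simp [natDegree_pow]
        rw [Finset.sum_congr rfl heq, Finset.sum_const,
          Finset.card_erase_of_mem (Finset.mem_univ i), Finset.card_univ, Fintype.card_fin,
          smul_eq_mul]
    have h2 : (n - 1) * h = n * h - h := by rw [Nat.sub_mul, one_mul]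
    have h3 : h ≤ n * h := Nat.le_mul_of_pos_left h hn
    omega
  have hQmul : Q * ((X : Polynomial K) - Polynomial.C (z i)) =
      ∏ s : Fin n, ((X : Polynomial K) - Polynomial.C (z s)) ^ h := by
    rw [hQdef, mul_right_comm, ← pow_succ, Nat.sub_add_cancel hh1,
      Finset.mul_prod_erase Finset.univ
        (fun s => ((X : Polynomial K) - Polynomial.C (z s)) ^ h) (Finset.mem_univ i)]
  have haQ : (aeval x Q) * (x - algebraMap K F (z i)) = y ^ (q * h) := by
    have h4 := congrArg (aeval x) hQmul
    simp only [map_mul, map_sub, aeval_X, aeval_C, map_prod, map_pow] at h4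
    rw [h4, Finset.prod_pow, ← hcurve, ← pow_mul]
  have hy0a : (y : F) ^ (a * p) ≠ 0 := pow_ne_zero _ hy0
  have hden : y ^ r * (x - algebraMap K F (z i)) ≠ 0 :=
    mul_ne_zero (pow_ne_zero _ hy0) hxi
  have key : (1 : F) / (y ^ r * (x - algebraMap K F (z i))) = aeval x Q / y ^ (a * p) := by
    rw [div_eq_div_iff hden hy0a, one_mul, mul_comm a p, hpa, pow_add]
    rw [show aeval x Q * (y ^ r * (x - algebraMap K F (z i)))
        = (aeval x Q * (x - algebraMap K F (z i))) * y ^ r by ring, haQ]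
    ring
  rw [key, Polynomial.aeval_eq_sum_range' hdeg x, Finset.sum_div, map_sum]
  simp only [Algebra.smul_def, mul_div_assoc, hCsmul]
  set T : Finset ℕ := (Finset.Icc 1 (n * h / p)).image (fun l => p * l - 1) with hT
  have hsub : T ⊆ Finset.range (n * h) := by
    intro k hk
    rw [hT, Finset.mem_image] at hk
    obtain ⟨l, hl, rfl⟩ := hk
    rw [Finset.mem_Icc] at hl
    have h1 : l * p ≤ n * h := (Nat.le_div_iff_mul_le hp).mp hl.2
    rw [mul_comm l p] at h1
    exact Finset.mem_range.mpr (lt_of_lt_of_le (Nat.sub_lt (Nat.mul_pos hp hl.1) one_pos) h1)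
  have hzero : ∀ k ∈ Finset.range (n * h), k ∉ T →
      algebraMap K F (Q.coeff k) * C (x ^ k / y ^ (a * p)) = 0 := by
    intro k hk hkT
    have hnd : ¬ p ∣ (k + 1) := by
      intro ⟨l, hl⟩
      apply hkT
      rw [hT, Finset.mem_image]
      refine ⟨l, ?_, by omega⟩
      rw [Finset.mem_Icc]
      constructor
      · rcases Nat.eq_zero_or_pos l with rfl | h0
        · simp at hl
        · exact h0
      · rw [Nat.le_div_iff_mul_le hp, mul_comm l p, ← hl]
        exact Nat.succ_le_of_lt (Finset.mem_range.mp hk)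
    rw [hC0 k hnd, mul_zero]
  have hinj : ∀ l₁ ∈ Finset.Icc 1 (n * h / p), ∀ l₂ ∈ Finset.Icc 1 (n * h / p),
      p * l₁ - 1 = p * l₂ - 1 → l₁ = l₂ := by
    intro l₁ h₁ l₂ h₂ he
    rw [Finset.mem_Icc] at h₁ h₂
    have e1 : 0 < p * l₁ := Nat.mul_pos hp h₁.1
    have e2 : 0 < p * l₂ := Nat.mul_pos hp h₂.1
    have : p * l₁ = p * l₂ := by omega
    exact Nat.eq_of_mul_eq_mul_left hp this
  rw [← Finset.sum_subset hsub hzero, hT, Finset.sum_image hinj]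
  refine Finset.sum_congr rfl ?_
  intro l hl
  rw [Finset.mem_Icc] at hl
  have hpl : p * ((l - 1) + 1) - 1 = p * l - 1 := by rw [Nat.sub_add_cancel hl.1]
  rw [← hpl, hC1 (l - 1)]
end

section
/- Let $\mathbb{K}$ be a field of characteristic $p$ with $p \nmid n$, $n > 1$, and $h \in \mathbb{F}_p \setminus \{0\}$ with representative $1 \le \tilde h \le p-1$. Suppose $0 < \lfloor n\tilde h/p \rfloor < n - 1$. Let $Q^{(\ell p -1)}(z, h)$ and $Q^{(mp-1)}(z, -h)$ be the $p$-hypergeometric solutions. Then for each $k$, the rank-one operator on $V = \{v \in \mathbb{K}^n : \sum v_i = 0\}$ defined by $\Psi_k(v) = \frac{h}{C_k(z)^p}\, S\Big( \sum_{m} Q^{(mp-1)}(z,-h) z_k^{p(m-1)},\, v \Big) \cdot \sum_{\ell} Q^{(\ell p -1)}(z,h) z_k^{p(\ell-1)}$ annihilates every $p$-hypergeometric solution $Q^{(\ell' p - 1)}(z, h)$, where $S$ is the Shapovalov form $S(x,y) = \sum_a x_a y_a$ and $C_k(z) = \prod_{i \ne k}(z_k - z_i)$. -/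
/-
Write `A_a = Pᵉ/(X - z_a)` and `B_a = Pᵉ'/(X - z_a)` with `P = ∏ (X - z_s)` and `e + e' = 0`
in the base ring. The relations `(X - z_a) A_a = Pᵉ` and `e ∑ A_a = (Pᵉ)'` (and likewise for
`B`) let one move along an antidiagonal `i + j = const` of the pairing
`f(i, j) = ∑_a A_a[i] B_a[j]` of coefficients; when `i + j + 2 = 0` in the ring this gives the
closed form `e f(i, j) = (i + 1) Pᵉ[i + 1] Pᵉ'[j + 1]`, which vanishes once `i + 1 = 0`.
For `e = p - h`, `e' = h`, `i = m p - 1`, `j = ℓ p - 1` in characteristic `p` this is the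
orthogonality `S(Q^{(mp-1)}(z,-h), Q^{(ℓp-1)}(z,h)) = 0`, which kills the middle factor of `Ψ_k`.
-/

open Polynomial Finset

section Recurrence

variable {R : Type*} [CommRing R]

theorem coeff_eq_of_X_sub_C_mul_eq {r : R} {A u : R[X]} (h : (X - C r) * A = u) (k : ℕ) :
    A.coeff k = r * A.coeff (k + 1) + u.coeff (k + 1) := by
  rw [← h, coeff_X_sub_C_mul]
  ring

theorem mul_coeff_zero_of_X_sub_C_mul_eq {r : R} {A u : R[X]} (h : (X - C r) * A = u) :
    r * A.coeff 0 = -u.coeff 0 := by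
  rw [← h, mul_coeff_zero]
  simp

theorem mul_sum_coeff_of_derivative_eq {ι : Type*} [Fintype ι] {A : ι → R[X]} {u : R[X]}
    {e : R} (hu : derivative u = C e * ∑ a, A a) (k : ℕ) :
    e * ∑ a, (A a).coeff k = (k + 1) * u.coeff (k + 1) := by
  have := congr_arg (coeff · k) hu
  simp only [coeff_derivative, coeff_C_mul, finsetSum_coeff] at this
  rw [← this, mul_comm]

variable {ι : Type*} [Fintype ι] {z : ι → R} {A B : ι → R[X]} {u v : R[X]} {e e' : R}

theorem mul_sum_coeff_mul_coeff_of_add_add_two_eq_zero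
    (hA : ∀ a, (X - C (z a)) * A a = u) (hB : ∀ a, (X - C (z a)) * B a = v)
    (hu : derivative u = C e * ∑ a, A a) (hv : derivative v = C e' * ∑ a, B a)
    (he : e + e' = 0) (i j : ℕ) (hij : ((i + j + 2 : ℕ) : R) = 0) :
    e * ∑ a, (A a).coeff i * (B a).coeff j = (i + 1) * u.coeff (i + 1) * v.coeff (j + 1) := by
  have hAsum := mul_sum_coeff_of_derivative_eq hu
  have hBsum := mul_sum_coeff_of_derivative_eq hv
  induction i generalizing j with
  | zero =>
    have hsum : ∑ a, (A a).coeff 0 * (B a).coeff j =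
        -u.coeff 0 * ∑ a, (B a).coeff (j + 1) + v.coeff (j + 1) * ∑ a, (A a).coeff 0 := by
      rw [mul_sum, mul_sum, ← sum_add_distrib]
      refine sum_congr rfl fun a _ => ?_
      rw [coeff_eq_of_X_sub_C_mul_eq (hB a) j]
      linear_combination (B a).coeff (j + 1) * mul_coeff_zero_of_X_sub_C_mul_eq (hA a)
    have hBk := hBsum (j + 1)
    have hAk := hAsum 0
    push_cast at hij hBk hAk
    linear_combination e * hsum + v.coeff (j + 1) * hAk
      - u.coeff 0 * (∑ a, (B a).coeff (j + 1)) * he + u.coeff 0 * hBk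
      + u.coeff 0 * v.coeff (j + 1 + 1) * hij
  | succ i ih =>
    have hstep :
        ∑ a, (A a).coeff i * (B a).coeff (j + 1) - ∑ a, (A a).coeff (i + 1) * (B a).coeff j =
          u.coeff (i + 1) * ∑ a, (B a).coeff (j + 1)
            - v.coeff (j + 1) * ∑ a, (A a).coeff (i + 1) := by
      rw [mul_sum, mul_sum, ← sum_sub_distrib, ← sum_sub_distrib]
      refine sum_congr rfl fun a _ => ?_
      rw [coeff_eq_of_X_sub_C_mul_eq (hA a) i, coeff_eq_of_X_sub_C_mul_eq (hB a) j]
      ring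
    have hprev := ih (j + 1) (by rwa [show i + (j + 1) + 2 = i + 1 + j + 2 by ring])
    have hBk := hBsum (j + 1)
    have hAk := hAsum (i + 1)
    push_cast at hij hprev hBk hAk ⊢
    linear_combination -e * hstep + hprev + v.coeff (j + 1) * hAk
      - u.coeff (i + 1) * (∑ a, (B a).coeff (j + 1)) * he + u.coeff (i + 1) * hBk
      + u.coeff (i + 1) * v.coeff (j + 1 + 1) * hij

theorem sum_coeff_mul_coeff_eq_zero [NoZeroDivisors R]
    (hA : ∀ a, (X - C (z a)) * A a = u) (hB : ∀ a, (X - C (z a)) * B a = v)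
    (hu : derivative u = C e * ∑ a, A a) (hv : derivative v = C e' * ∑ a, B a)
    (he : e + e' = 0) (he0 : e ≠ 0) {i j : ℕ} (hi : ((i + 1 : ℕ) : R) = 0)
    (hj : ((j + 1 : ℕ) : R) = 0) :
    ∑ a, (A a).coeff i * (B a).coeff j = 0 := by
  have key := mul_sum_coeff_mul_coeff_of_add_add_two_eq_zero hA hB hu hv he i j
    (by push_cast at hi hj ⊢; linear_combination hi + hj)
  push_cast at hi
  rw [hi, zero_mul, zero_mul] at key
  exact (mul_eq_zero.mp key).resolve_left he0

end Recurrence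

section ProdXSubCPow

variable {R ι : Type*} [CommRing R] [Fintype ι] [DecidableEq ι]

/-- `Pᵉ / (X - z_a)` for `P = ∏ s, (X - z_s)`. -/
noncomputable def prodXSubCPowDiv (z : ι → R) (e : ℕ) (a : ι) : R[X] :=
  (X - C (z a)) ^ (e - 1) * ∏ s ∈ univ.erase a, (X - C (z s)) ^ e

theorem X_sub_C_mul_prodXSubCPowDiv (z : ι → R) {e : ℕ} (he : 1 ≤ e) (a : ι) :
    (X - C (z a)) * prodXSubCPowDiv z e a = ∏ s, (X - C (z s)) ^ e := by
  rw [prodXSubCPowDiv, ← mul_assoc, ← pow_succ', Nat.sub_add_cancel he,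
    mul_prod_erase univ (fun s => (X - C (z s)) ^ e) (mem_univ a)]

theorem derivative_prod_X_sub_C_pow (z : ι → R) (e : ℕ) :
    derivative (∏ s, (X - C (z s)) ^ e) = C (e : R) * ∑ a, prodXSubCPowDiv z e a := by
  rw [derivative_prod_finset, mul_sum]
  refine sum_congr rfl fun a _ => ?_
  rw [derivative_pow, derivative_sub, derivative_X, derivative_C, prodXSubCPowDiv]
  ring

theorem sum_coeff_prodXSubCPowDiv_mul_eq_zero [NoZeroDivisors R] (z : ι → R) {e e' : ℕ}
    (he : 1 ≤ e) (he' : 1 ≤ e') (hee' : ((e + e' : ℕ) : R) = 0) (he0 : (e : R) ≠ 0)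
    {i j : ℕ} (hi : ((i + 1 : ℕ) : R) = 0) (hj : ((j + 1 : ℕ) : R) = 0) :
    ∑ a, (prodXSubCPowDiv z e a).coeff i * (prodXSubCPowDiv z e' a).coeff j = 0 :=
  sum_coeff_mul_coeff_eq_zero (X_sub_C_mul_prodXSubCPowDiv z he)
    (X_sub_C_mul_prodXSubCPowDiv z he') (derivative_prod_X_sub_C_pow z e)
    (derivative_prod_X_sub_C_pow z e') (by exact_mod_cast hee') he0 hi hj

end ProdXSubCPow

theorem stmt_19_general (p : ℕ) (K : Type*) [Field K] [CharP K p]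
    (n : ℕ)
    (h : ℕ) (hh1 : 1 ≤ h) (hh2 : h ≤ p - 1)
    (z : Fin n → K)
    (Qp Qm : ℕ → Fin n → K)
    (hQp : ∀ (N : ℕ) (j : Fin n), Qp N j =
      ((((X : Polynomial K) - Polynomial.C (z j)) ^ (h - 1) *
        ∏ s ∈ Finset.univ.erase j,
          ((X : Polynomial K) - Polynomial.C (z s)) ^ h).coeff N))
    (hQm : ∀ (N : ℕ) (j : Fin n), Qm N j =
      ((((X : Polynomial K) - Polynomial.C (z j)) ^ ((p - h) - 1) *
        ∏ s ∈ Finset.univ.erase j,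
          ((X : Polynomial K) - Polynomial.C (z s)) ^ (p - h)).coeff N))
    (k : Fin n) (ℓ' : ℕ) (hℓ' : ℓ' ∈ Finset.Icc 1 (n * h / p)) :
    ∀ j : Fin n,
      (h : K) / (∏ i ∈ Finset.univ.erase k, (z k - z i)) ^ p *
        (∑ a : Fin n,
          (∑ m ∈ Finset.Icc 1 (n * (p - h) / p), Qm (m * p - 1) a * z k ^ (p * (m - 1))) *
            Qp (ℓ' * p - 1) a) *
        (∑ ℓ ∈ Finset.Icc 1 (n * h / p), Qp (ℓ * p - 1) j * z k ^ (p * (ℓ - 1))) = 0 := by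
  intro j
  have hpred_succ : ∀ m ≥ 1, (((m * p - 1) + 1 : ℕ) : K) = 0 := fun m hm => by
    rw [Nat.sub_add_cancel (Nat.mul_pos hm (by omega)), Nat.cast_mul, CharP.cast_eq_zero K p,
      mul_zero]
  have horth : ∀ m ≥ 1, ∑ a, Qm (m * p - 1) a * Qp (ℓ' * p - 1) a = 0 := fun m hm => by
    simp only [hQm, hQp]
    refine sum_coeff_prodXSubCPowDiv_mul_eq_zero z (by omega) hh1 ?_ ?_ (hpred_succ m hm)
      (hpred_succ ℓ' (mem_Icc.mp hℓ').1)
    · rw [Nat.sub_add_cancel (by omega), CharP.cast_eq_zero]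
    · rw [Ne, CharP.cast_eq_zero_iff K p]
      exact Nat.not_dvd_of_pos_of_lt (by omega) (by omega)
  have hpairing :
      ∑ a, (∑ m ∈ Icc 1 (n * (p - h) / p), Qm (m * p - 1) a * z k ^ (p * (m - 1))) *
        Qp (ℓ' * p - 1) a = 0 := by
    simp_rw [sum_mul]
    rw [sum_comm]
    refine sum_eq_zero fun m hm => ?_
    simp_rw [mul_right_comm _ (z k ^ _)]
    rw [← sum_mul, horth m (mem_Icc.mp hm).1, zero_mul]
  rw [hpairing, mul_zero, zero_mul]

/-- The `p`-curvature operators of the KZ connection annihilate the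
`p`-hypergeometric solutions.  Here `Qp N j` (resp. `Qm N j`) is the coefficient
`Q_j^{(N)}(z, h)` (resp. `Q_j^{(N)}(z, -h)`) of `x^N` in `P^{h̃}/(x - z_j)`
(resp. `P^{p-h̃}/(x - z_j)`), and for each `k` the rank-one operator
`Ψ_k(v) = (h / C_k(z)^p) · S(∑_m Q^{(mp-1)}(z,-h) z_k^{p(m-1)}, v) ·
∑_ℓ Q^{(ℓp-1)}(z,h) z_k^{p(ℓ-1)}`
kills every `p`-hypergeometric solution `Q^{(ℓ'p-1)}(z,h)`; the conclusion below
states that each coordinate `j` of `Ψ_k(Q^{(ℓ'p-1)}(z,h))` vanishes. -/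
theorem stmt_19 (p : ℕ) [Fact p.Prime] (K : Type*) [Field K] [CharP K p]
    (n : ℕ) (hn : 1 < n) (hpn : ¬ p ∣ n)
    (h : ℕ) (hh1 : 1 ≤ h) (hh2 : h ≤ p - 1)
    (hd1 : 0 < n * h / p) (hd2 : n * h / p < n - 1)
    (z : Fin n → K) (hz : Function.Injective z)
    (Qp Qm : ℕ → Fin n → K)
    (hQp : ∀ (N : ℕ) (j : Fin n), Qp N j =
      ((((X : Polynomial K) - Polynomial.C (z j)) ^ (h - 1) *
        ∏ s ∈ Finset.univ.erase j,
          ((X : Polynomial K) - Polynomial.C (z s)) ^ h).coeff N))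
    (hQm : ∀ (N : ℕ) (j : Fin n), Qm N j =
      ((((X : Polynomial K) - Polynomial.C (z j)) ^ ((p - h) - 1) *
        ∏ s ∈ Finset.univ.erase j,
          ((X : Polynomial K) - Polynomial.C (z s)) ^ (p - h)).coeff N))
    (k : Fin n) (ℓ' : ℕ) (hℓ' : ℓ' ∈ Finset.Icc 1 (n * h / p)) :
    ∀ j : Fin n,
      (h : K) / (∏ i ∈ Finset.univ.erase k, (z k - z i)) ^ p *
        (∑ a : Fin n,
          (∑ m ∈ Finset.Icc 1 (n * (p - h) / p), Qm (m * p - 1) a * z k ^ (p * (m - 1))) *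
            Qp (ℓ' * p - 1) a) *
        (∑ ℓ ∈ Finset.Icc 1 (n * h / p), Qp (ℓ * p - 1) j * z k ^ (p * (ℓ - 1))) = 0 :=
  stmt_19_general p K n h hh1 hh2 z Qp Qm hQp hQm k ℓ' hℓ'
end
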